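/- arXiv:0711.0170 — 6 statements merged into one kernel-verified Lean document; each statement's English description precedes it below -/
import Mathlib

section
/- Let f : 𝔻 → ℂ be analytic on the unit disc with power series f(z) = Σ aₙ zⁿ. Then the Euclidean area of the image counting multiplicity equals π Σ_{n≥1} n |aₙ|², i.e. ∫_𝔻 |f'(z)|² dA(z) = π Σ_{n≥1} n |aₙ|². -/
/-!
In polar coordinates the monomials `z ^ n` are orthogonal on every disc `‖z‖ < r`, with
`∫ ‖z ^ n‖ ^ 2 = π r ^ (2n+2) / (n+1)`. For `r < 1` the series `f' z = ∑ (n+1) a (n+1) z ^ n`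
converges uniformly on that disc, so `∫ ‖f'‖ ^ 2 = π ∑ n ‖a n‖ ^ 2 r ^ (2n)` there. Letting `r ↑ 1`,
monotone convergence on both sides, carried out in `ℝ≥0∞`, gives the identity on the unit disc.
Taking `toReal` of that identity also covers the case where both sides are infinite, in which the
Bochner integral and the real `tsum` both take the junk value `0`.
-/

open MeasureTheory Metric Real Set Filter Topology
open scoped ComplexConjugate ENNReal

theorem ENNReal.tsum_iSup_of_monotone {α ι : Type*} [Preorder ι] [IsDirectedOrder ι]
    {f : α → ι → ℝ≥0∞} (hf : ∀ a, Monotone (f a)) :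
    ∑' a, ⨆ i, f a i = ⨆ i, ∑' a, f a i := by
  simp_rw [ENNReal.tsum_eq_iSup_sum, ENNReal.finsetSum_iSup_of_monotone hf]
  exact iSup_comm

theorem Complex.polarCoord_symm_eq_ofReal_mul_exp (p : ℝ × ℝ) :
    Complex.polarCoord.symm p = p.1 * Complex.exp (p.2 * Complex.I) := by
  rw [Complex.polarCoord_symm_apply, Complex.exp_mul_I, ← Complex.ofReal_cos,
    ← Complex.ofReal_sin]

theorem integral_ball_zero_eq_integral_polarCoord {E : Type*} [NormedAddCommGroup E]
    [NormedSpace ℝ E] (g : ℂ → E) (R : ℝ) :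
    ∫ z in ball (0 : ℂ) R, g z =
      ∫ p in Ioo 0 R ×ˢ Ioo (-π) π, p.1 • g (Complex.polarCoord.symm p) := by
  have hball : ∀ p ∈ polarCoord.target,
      p.1 • (ball (0 : ℂ) R).indicator g (Complex.polarCoord.symm p) =
        (Iio R ×ˢ univ).indicator (fun p ↦ p.1 • g (Complex.polarCoord.symm p)) p := by
    rintro ⟨r, θ⟩ ⟨hr : 0 < r, -⟩
    by_cases h : r < R
    · rw [indicator_of_mem (by simpa [abs_of_pos hr] using h),
        indicator_of_mem (by simpa using h)]
    · rw [indicator_of_notMem (by simpa [abs_of_pos hr] using h),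
        indicator_of_notMem (by simpa using h), smul_zero]
  rw [← integral_indicator measurableSet_ball, ← Complex.integral_comp_polarCoord_symm,
    setIntegral_congr_fun polarCoord.open_target.measurableSet hball,
    setIntegral_indicator (measurableSet_Iio.prod .univ)]
  congr 2
  ext ⟨r, θ⟩
  simp only [polarCoord_target, mem_inter_iff, mem_prod, mem_Ioi, mem_Ioo, mem_Iio, mem_univ]
  tauto

theorem integral_Ioo_neg_pi_pi_exp_int_mul_I {k : ℤ} (hk : k ≠ 0) :
    ∫ θ in Ioo (-π) π, Complex.exp (k * Complex.I * θ) = 0 := by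
  have hkI : (k : ℂ) * Complex.I ≠ 0 := by simp [hk]
  have hperiod : Complex.exp (k * Complex.I * π) = Complex.exp (k * Complex.I * (-π : ℝ)) := by
    rw [← mul_one (Complex.exp (_ * ((-π : ℝ) : ℂ))), ← Complex.exp_int_mul_two_pi_mul_I k,
      ← Complex.exp_add]
    push_cast
    ring_nf
  rw [← integral_Ioc_eq_integral_Ioo, ← intervalIntegral.integral_of_le (by linarith [pi_pos]),
    integral_exp_mul_complex hkI, hperiod, sub_self, zero_div]

theorem integral_ball_pow_mul_conj_pow {R : ℝ} (hR : 0 ≤ R) (n m : ℕ) :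
    ∫ z in ball (0 : ℂ) R, z ^ n * conj z ^ m =
      if n = m then ((π * R ^ (2 * n + 2) / (n + 1) : ℝ) : ℂ) else 0 := by
  have hpolar : ∀ p : ℝ × ℝ, p.1 • (Complex.polarCoord.symm p ^ n *
      conj (Complex.polarCoord.symm p) ^ m) =
        (p.1 : ℂ) ^ (n + m + 1) * Complex.exp (((n - m : ℤ) : ℂ) * Complex.I * p.2) := by
    rintro ⟨r, θ⟩
    simp only [Complex.polarCoord_symm_eq_ofReal_mul_exp, map_mul, Complex.conj_ofReal,
      ← Complex.exp_conj, Complex.conj_I, Complex.real_smul, mul_pow, ← Complex.exp_nat_mul]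
    rw [show (r : ℂ) * ((r : ℂ) ^ n * Complex.exp (n * (θ * Complex.I)) *
        ((r : ℂ) ^ m * Complex.exp (m * (θ * -Complex.I)))) =
        (r : ℂ) ^ (n + m + 1) * (Complex.exp (n * (θ * Complex.I)) *
          Complex.exp (m * (θ * -Complex.I))) by ring, ← Complex.exp_add]
    push_cast
    ring_nf
  have hrad : ∫ r in Ioo 0 R, (r : ℂ) ^ (n + m + 1) =
      ((R ^ (n + m + 2) / (n + m + 2) : ℝ) : ℂ) := by
    norm_cast
    rw [← integral_Ioc_eq_integral_Ioo, ← intervalIntegral.integral_of_le hR, integral_pow]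
    push_cast
    ring_nf
  rw [integral_ball_zero_eq_integral_polarCoord]
  simp_rw [hpolar]
  have hprod := setIntegral_prod_mul (μ := volume) (ν := volume)
    (fun r : ℝ ↦ (r : ℂ) ^ (n + m + 1))
    (fun θ : ℝ ↦ Complex.exp (((n - m : ℤ) : ℂ) * Complex.I * θ)) (Ioo 0 R) (Ioo (-π) π)
  rw [Measure.volume_eq_prod, hprod, hrad]
  split_ifs with hnm
  · subst hnm
    simp only [sub_self, Int.cast_zero, zero_mul, Complex.exp_zero, setIntegral_const,
      Real.volume_real_Ioo_of_le (by linarith [pi_pos] : -π ≤ π), Complex.real_smul, mul_one]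
    push_cast
    rw [show (n : ℂ) + n + 2 = 2 * (n + 1) by ring, show n + n + 2 = 2 * n + 2 by ring]
    field_simp
    ring
  · rw [integral_Ioo_neg_pi_pi_exp_int_mul_I (sub_ne_zero.2 (by exact_mod_cast hnm)), mul_zero]

theorem integral_ball_norm_sum_mul_pow_sq {R : ℝ} (hR : 0 ≤ R) (c : ℕ → ℂ) (s : Finset ℕ) :
    ∫ z in ball (0 : ℂ) R, ‖∑ k ∈ s, c k * z ^ k‖ ^ 2 =
      ∑ k ∈ s, ‖c k‖ ^ 2 * (π * R ^ (2 * k + 2) / (k + 1)) := by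
  have hint : ∀ k l : ℕ, IntegrableOn (fun z : ℂ ↦ c k * conj (c l) * (z ^ k * conj z ^ l))
      (ball 0 R) := fun k l ↦
    ((Continuous.locallyIntegrable (by fun_prop)).integrableOn_isCompact
      (isCompact_closedBall 0 R)).mono_set ball_subset_closedBall
  have hexpand : ∀ z : ℂ, ((‖∑ k ∈ s, c k * z ^ k‖ ^ 2 : ℝ) : ℂ) =
      ∑ k ∈ s, ∑ l ∈ s, c k * conj (c l) * (z ^ k * conj z ^ l) := fun z ↦ by
    rw [Complex.ofReal_pow, ← Complex.mul_conj', map_sum, Finset.sum_mul_sum]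
    simp only [map_mul, map_pow]
    exact Finset.sum_congr rfl fun k _ ↦ Finset.sum_congr rfl fun l _ ↦ by ring
  apply Complex.ofReal_injective
  rw [← integral_complex_ofReal]
  simp_rw [hexpand]
  rw [integral_finsetSum _ fun k _ ↦ integrable_finsetSum _ fun l _ ↦ hint k l]
  push_cast
  refine Finset.sum_congr rfl fun k hk ↦ ?_
  rw [integral_finsetSum _ fun l _ ↦ hint k l]
  simp_rw [integral_const_mul, integral_ball_pow_mul_conj_pow hR, mul_ite, mul_zero,
    Finset.sum_ite_eq, if_pos hk, Complex.mul_conj']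
  push_cast
  ring

theorem lintegral_ball_norm_sq_of_hasSum {g : ℂ → ℂ} {c : ℕ → ℂ} {r : ℝ} (hr : 0 ≤ r)
    (hc : Summable fun k ↦ ‖c k‖ * r ^ k)
    (hg : ∀ z ∈ ball (0 : ℂ) r, HasSum (fun k ↦ c k * z ^ k) (g z)) :
    ∫⁻ z in ball (0 : ℂ) r, ENNReal.ofReal (‖g z‖ ^ 2) =
      ∑' k, ENNReal.ofReal (‖c k‖ ^ 2 * (π * r ^ (2 * k + 2) / (k + 1))) := by
  set G : ℕ → ℂ → ℂ := fun N z ↦ ∑ k ∈ Finset.range N, c k * z ^ k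
  have hG : ∀ N, Continuous (G N) := fun N ↦ by fun_prop
  have hbound : ∀ N, ∀ z ∈ ball (0 : ℂ) r, ‖G N z‖ ≤ ∑' k, ‖c k‖ * r ^ k := fun N z hz ↦
    calc ‖G N z‖ ≤ ∑ k ∈ Finset.range N, ‖c k‖ * r ^ k := by
          refine norm_sum_le_of_le _ fun k _ ↦ ?_
          rw [norm_mul, norm_pow]
          gcongr
          exact (mem_ball_zero_iff.1 hz).le
      _ ≤ ∑' k, ‖c k‖ * r ^ k := hc.sum_le_tsum _ fun k _ ↦ by positivity
  have hpartial : ∀ N, ∫⁻ z in ball (0 : ℂ) r, ENNReal.ofReal (‖G N z‖ ^ 2) =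
      ∑ k ∈ Finset.range N, ENNReal.ofReal (‖c k‖ ^ 2 * (π * r ^ (2 * k + 2) / (k + 1))) := by
    intro N
    have hint : IntegrableOn (fun z ↦ ‖G N z‖ ^ 2) (ball (0 : ℂ) r) :=
      ((hG N).norm.pow 2 |>.locallyIntegrable.integrableOn_isCompact
        (isCompact_closedBall 0 r)).mono_set ball_subset_closedBall
    rw [← ofReal_integral_eq_lintegral_ofReal hint (.of_forall fun _ ↦ by positivity),
      integral_ball_norm_sum_mul_pow_sq hr, ENNReal.ofReal_sum_of_nonneg fun k _ ↦ by positivity]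
  have hlim : Tendsto (fun N ↦ ∫⁻ z in ball (0 : ℂ) r, ENNReal.ofReal (‖G N z‖ ^ 2)) atTop
      (𝓝 (∫⁻ z in ball (0 : ℂ) r, ENNReal.ofReal (‖g z‖ ^ 2))) :=
    tendsto_lintegral_of_dominated_convergence
    (fun _ ↦ ENNReal.ofReal ((∑' k, ‖c k‖ * r ^ k) ^ 2))
    (fun N ↦ ((hG N).norm.pow 2).measurable.ennreal_ofReal)
    (fun N ↦ (ae_restrict_iff' measurableSet_ball).2 <| .of_forall fun z hz ↦
      ENNReal.ofReal_le_ofReal <| pow_le_pow_left₀ (norm_nonneg _) (hbound N z hz) 2)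
    (by rw [setLIntegral_const]
        exact ENNReal.mul_ne_top ENNReal.ofReal_ne_top measure_ball_lt_top.ne)
    ((ae_restrict_iff' measurableSet_ball).2 <| .of_forall fun z hz ↦
      ((ENNReal.continuous_ofReal.tendsto _).comp ((hg z hz).tendsto_sum_nat.norm.pow 2)))
  simp_rw [hpartial] at hlim
  exact tendsto_nhds_unique hlim (ENNReal.tendsto_nat_tsum _)

theorem summable_norm_mul_pow_of_hasSum {f : ℂ → ℂ} {a : ℕ → ℂ} {R : ℝ}
    (ha : ∀ z ∈ ball (0 : ℂ) R, HasSum (fun n ↦ a n * z ^ n) (f z)) {r : ℝ} (hr₀ : 0 ≤ r)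
    (hr : r < R) : Summable fun n ↦ ‖a n‖ * r ^ n := by
  have hmem : (r : ℂ) ∈ ball (0 : ℂ) R := by simpa [abs_of_nonneg hr₀] using hr
  simpa [abs_of_nonneg hr₀] using (ha r hmem).summable.norm

section PowerSeries

variable {f : ℂ → ℂ} {a : ℕ → ℂ} {R : ℝ}
  (ha : ∀ z ∈ ball (0 : ℂ) R, HasSum (fun n ↦ a n * z ^ n) (f z))
include ha

theorem hasSum_deriv_of_hasSum_pow {z : ℂ} (hz : z ∈ ball (0 : ℂ) R) :
    HasSum (fun n : ℕ ↦ ((n : ℂ) + 1) * a (n + 1) * z ^ n) (deriv f z) := by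
  obtain ⟨ρ, hzρ, hρR⟩ := exists_between (mem_ball_zero_iff.1 hz)
  have hs := Complex.hasSum_deriv_of_summable_norm (F := fun n w ↦ a n * w ^ n)
    (summable_norm_mul_pow_of_hasSum ha ((norm_nonneg z).trans hzρ.le) hρR)
    (fun n ↦ by fun_prop) isOpen_ball
    (fun n w hw ↦ by rw [norm_mul, norm_pow]; gcongr; exact (mem_ball_zero_iff.1 hw).le)
    (mem_ball_zero_iff.2 hzρ)
  have hsum_eq : deriv (fun w ↦ ∑' n, a n * w ^ n) z = deriv f z :=
    EventuallyEq.deriv_eq <| eventually_of_mem (isOpen_ball.mem_nhds hz) fun w hw ↦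
      (ha w hw).tsum_eq
  rw [hsum_eq, ← hasSum_nat_add_iff' 1] at hs
  simpa [mul_comm, mul_left_comm, mul_assoc] using hs

theorem lintegral_ball_norm_deriv_sq_of_lt {r : ℝ} (hr₀ : 0 ≤ r) (hr : r < R) :
    ∫⁻ z in ball (0 : ℂ) r, ENNReal.ofReal (‖deriv f z‖ ^ 2) =
      ∑' n : ℕ, ENNReal.ofReal (π * n * ‖a n‖ ^ 2 * r ^ (2 * n)) := by
  have hderiv : ∀ z ∈ ball (0 : ℂ) R,
      HasSum (fun n : ℕ ↦ ((n : ℂ) + 1) * a (n + 1) * z ^ n) (deriv f z) :=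
    fun z hz ↦ hasSum_deriv_of_hasSum_pow ha hz
  rw [lintegral_ball_norm_sq_of_hasSum hr₀ (summable_norm_mul_pow_of_hasSum hderiv hr₀ hr)
    fun z hz ↦ hderiv z (ball_subset_ball hr.le hz)]
  conv_rhs => rw [tsum_eq_zero_add' ENNReal.summable]
  simp only [CharP.cast_eq_zero, mul_zero, zero_mul, ENNReal.ofReal_zero, zero_add]
  refine tsum_congr fun k ↦ congrArg ENNReal.ofReal ?_
  have hk : (k : ℝ) + 1 ≠ 0 := by positivity
  rw [norm_mul, show ((k : ℂ) + 1) = ((k + 1 : ℕ) : ℂ) by push_cast; ring, Complex.norm_natCast]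
  push_cast
  field_simp
  ring

theorem lintegral_ball_norm_deriv_sq (hR : 0 < R) :
    ∫⁻ z in ball (0 : ℂ) R, ENNReal.ofReal (‖deriv f z‖ ^ 2) =
      ∑' n : ℕ, ENNReal.ofReal (π * n * ‖a n‖ ^ 2 * R ^ (2 * n)) := by
  obtain ⟨r, hr_mono, hr_mem, hr_lim⟩ := exists_seq_strictMono_tendsto' hR
  have hball : ball (0 : ℂ) R = ⋃ k, ball 0 (r k) := by
    ext z
    simp only [mem_iUnion, mem_ball_zero_iff]
    exact ⟨fun hz ↦ (hr_lim.eventually (lt_mem_nhds hz)).exists,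
      fun ⟨k, hk⟩ ↦ hk.trans (hr_mem k).2⟩
  have hball_mono : Monotone fun k ↦ ball (0 : ℂ) (r k) :=
    fun k l hkl ↦ ball_subset_ball (hr_mono.monotone hkl)
  have hterm_mono (n : ℕ) :
      Monotone fun k ↦ ENNReal.ofReal (π * n * ‖a n‖ ^ 2 * r k ^ (2 * n)) := fun k l hkl ↦
    ENNReal.ofReal_le_ofReal <| mul_le_mul_of_nonneg_left
      (pow_le_pow_left₀ (hr_mem k).1.le (hr_mono.monotone hkl) _) (by positivity)
  rw [hball, setLIntegral_iUnion_of_directed _ hball_mono.directed_le]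
  simp_rw [lintegral_ball_norm_deriv_sq_of_lt ha (hr_mem _).1.le (hr_mem _).2]
  rw [← ENNReal.tsum_iSup_of_monotone hterm_mono]
  exact tsum_congr fun n ↦ iSup_eq_of_tendsto (hterm_mono n)
    (ENNReal.tendsto_ofReal (tendsto_const_nhds.mul (hr_lim.pow _)))

end PowerSeries

theorem stmt0_general (f : ℂ → ℂ) (a : ℕ → ℂ)
    (ha : ∀ z ∈ ball (0:ℂ) 1, HasSum (fun n => a n * z ^ n) (f z)) :
    ∫ z in ball (0:ℂ) 1, ‖deriv f z‖ ^ 2 =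
      π * ∑' n : ℕ, (n : ℝ) * ‖a n‖ ^ 2 := by
  rw [integral_eq_lintegral_of_nonneg_ae (.of_forall fun _ ↦ by positivity)
      ((measurable_deriv f).norm.pow_const 2).aestronglyMeasurable,
    lintegral_ball_norm_deriv_sq ha one_pos, ENNReal.tsum_toReal_eq fun _ ↦ ENNReal.ofReal_ne_top,
    ← tsum_mul_left]
  refine tsum_congr fun n ↦ ?_
  rw [one_pow, mul_one, ENNReal.toReal_ofReal (by positivity), mul_assoc]

theorem stmt0 (f : ℂ → ℂ) (a : ℕ → ℂ)
    (hf : AnalyticOn ℂ f (ball (0:ℂ) 1))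
    (ha : ∀ z ∈ ball (0:ℂ) 1, HasSum (fun n => a n * z ^ n) (f z)) :
    ∫ z in ball (0:ℂ) 1, ‖deriv f z‖ ^ 2 =
      π * ∑' n : ℕ, (n : ℝ) * ‖a n‖ ^ 2 :=
  stmt0_general f a ha
end

section
/- Let f : 𝔻 → ℂ be analytic with finite Dirichlet integral A = ∫_𝔻 |f'(z)|² dA(z). Then for every z₀ ∈ 𝔻, the hyperbolic-to-Euclidean derivative norm satisfies |f'(z₀)|·(1−|z₀|²)/2 ≤ (A/(4π))^{1/2}. -/
/-!
Let `φ` be the automorphism of the unit disc with `φ 0 = z₀`, so `|φ'(0)| = 1 - |z₀|²`, and put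
`h = (f' ∘ φ) · φ'`. Since `φ` is injective and holomorphic, its real Jacobian is `|φ'|²`, so
`∫_𝔻 |h|² = ∫_{φ(𝔻)} |f'|² ≤ A`. On the other hand `h²` is holomorphic, so the mean value property
on circles, integrated over the radius, gives `π |h(0)|² ≤ ∫_𝔻 |h|²`. Hence
`π |f'(z₀)|² (1 - |z₀|²)² ≤ A`.
-/

open MeasureTheory Metric Real Set ComplexConjugate

section MeanValue

variable {E : Type*} [NormedAddCommGroup E]

theorem norm_le_circleAverage_norm [NormedSpace ℂ E] [CompleteSpace E] {g : ℂ → E} {c : ℂ}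
    {R : ℝ} (hg : DiffContOnCl ℂ g (ball c |R|)) :
    ‖g c‖ ≤ circleAverage (fun z ↦ ‖g z‖) c R := by
  rw [← hg.circleAverage, circleAverage_def, circleAverage_def, norm_smul, smul_eq_mul,
    Real.norm_of_nonneg (by positivity)]
  gcongr
  exact intervalIntegral.norm_integral_le_integral_norm two_pi_pos.le

theorem setIntegral_Ioo_circleMap_eq_circleAverage [NormedSpace ℝ E] (F : ℂ → E) (c : ℂ)
    (R : ℝ) : ∫ θ in Ioo (-π) π, F (circleMap c R θ) = (2 * π) • circleAverage F c R := by
  have hper : Function.Periodic (fun θ ↦ F (circleMap c R θ)) (2 * π) :=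
    fun θ ↦ by simp [periodic_circleMap c R θ]
  rw [circleAverage_def, smul_inv_smul₀ two_pi_pos.ne', ← zero_add (2 * π),
    ← hper.intervalIntegral_add_eq (-π) 0, intervalIntegral.integral_of_le (by linarith [pi_pos]),
    integral_Ioc_eq_integral_Ioo]
  ring_nf

theorem setIntegral_ball_eq_setIntegral_polar [NormedSpace ℝ E] (F : ℂ → E) (c : ℂ) (ρ : ℝ) :
    ∫ z in ball c ρ, F z = ∫ p in Ioo 0 ρ ×ˢ Ioo (-π) π, p.1 • F (circleMap c p.1 p.2) := by
  have hpolar (p : ℝ × ℝ) : c + Complex.polarCoord.symm p = circleMap c p.1 p.2 := by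
    simp [circleMap, Complex.exp_mul_I]
  have hrect : Ioi 0 ×ˢ Ioo (-π) π ∩ Iio ρ ×ˢ univ = Ioo 0 ρ ×ˢ Ioo (-π) π := by
    ext p; simp only [mem_inter_iff, mem_prod, mem_Ioi, mem_Ioo, mem_Iio, mem_univ]; tauto
  rw [← integral_indicator measurableSet_ball, ← integral_add_left_eq_self _ c,
    ← Complex.integral_comp_polarCoord_symm, polarCoord_target, ← hrect,
    ← setIntegral_indicator (measurableSet_Iio.prod MeasurableSet.univ)]
  refine setIntegral_congr_fun (measurableSet_Ioi.prod measurableSet_Ioo) fun p hp ↦ ?_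
  have hmem : circleMap c p.1 p.2 ∈ ball c ρ ↔ p ∈ Iio ρ ×ˢ univ := by
    simp [dist_eq_norm, circleMap_sub_center, abs_of_pos (mem_Ioi.1 hp.1)]
  by_cases h : p ∈ Iio ρ ×ˢ univ
  · rw [hpolar, indicator_of_mem (hmem.2 h), indicator_of_mem h]
  · rw [hpolar, indicator_of_notMem (mt hmem.1 h), indicator_of_notMem h, smul_zero]

variable [NormedSpace ℂ E] [CompleteSpace E] {g : ℂ → E} {c : ℂ} {ρ : ℝ}

theorem DiffContOnCl.pi_mul_sq_mul_norm_le_setIntegral_norm (hg : DiffContOnCl ℂ g (ball c ρ))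
    (hρ : 0 < ρ) : π * ρ ^ 2 * ‖g c‖ ≤ ∫ z in ball c ρ, ‖g z‖ := by
  have hcont : ContinuousOn (fun p : ℝ × ℝ ↦ p.1 • ‖g (circleMap c p.1 p.2)‖)
      (Icc 0 ρ ×ˢ Icc (-π) π) := by
    refine continuousOn_fst.smul (hg.continuousOn_ball.norm.comp (by fun_prop) fun p hp ↦ ?_)
    simp [dist_eq_norm, circleMap_sub_center, abs_of_nonneg hp.1.1, hp.1.2]
  have hint : IntegrableOn (fun p : ℝ × ℝ ↦ p.1 • ‖g (circleMap c p.1 p.2)‖)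
      (Ioo 0 ρ ×ˢ Ioo (-π) π) (volume.prod volume) :=
    (hcont.integrableOn_compact (isCompact_Icc.prod isCompact_Icc)).mono_set
      (prod_mono Ioo_subset_Icc_self Ioo_subset_Icc_self)
  have hint_prod : Integrable (fun p : ℝ × ℝ ↦ p.1 • ‖g (circleMap c p.1 p.2)‖)
      ((volume.restrict (Ioo 0 ρ)).prod (volume.restrict (Ioo (-π) π))) := by
    rwa [Measure.prod_restrict]
  have hcircle : ∀ s ∈ Ioo 0 ρ,
      s * (2 * π * ‖g c‖) ≤ ∫ θ in Ioo (-π) π, s • ‖g (circleMap c s θ)‖ := by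
    intro s hs
    have hgs : DiffContOnCl ℂ g (ball c |s|) := by
      rw [abs_of_pos hs.1]; exact hg.mono (ball_subset_ball hs.2.le)
    rw [integral_smul, setIntegral_Ioo_circleMap_eq_circleAverage (fun z ↦ ‖g z‖), smul_eq_mul,
      smul_eq_mul]
    gcongr
    exacts [hs.1.le, norm_le_circleAverage_norm hgs]
  calc π * ρ ^ 2 * ‖g c‖ = ∫ s in Ioo 0 ρ, s * (2 * π * ‖g c‖) := by
        rw [← integral_Ioc_eq_integral_Ioo, ← intervalIntegral.integral_of_le hρ.le,
          intervalIntegral.integral_mul_const, integral_id]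
        ring
    _ ≤ ∫ s in Ioo 0 ρ, ∫ θ in Ioo (-π) π, s • ‖g (circleMap c s θ)‖ :=
        setIntegral_mono_on ((continuous_id.mul continuous_const).integrableOn_Icc.mono_set
          Ioo_subset_Icc_self) hint_prod.integral_prod_left measurableSet_Ioo hcircle
    _ = ∫ z in ball c ρ, ‖g z‖ := by
        rw [setIntegral_ball_eq_setIntegral_polar, Measure.volume_eq_prod, setIntegral_prod _ hint]

theorem DifferentiableOn.pi_mul_sq_mul_norm_le_setIntegral_norm
    (hg : DifferentiableOn ℂ g (ball c ρ)) (hρ : 0 < ρ)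
    (hint : IntegrableOn (fun z ↦ ‖g z‖) (ball c ρ)) :
    π * ρ ^ 2 * ‖g c‖ ≤ ∫ z in ball c ρ, ‖g z‖ := by
  have hlim : Filter.Tendsto (fun s ↦ π * s ^ 2 * ‖g c‖) (nhdsWithin ρ (Iio ρ))
      (nhds (π * ρ ^ 2 * ‖g c‖)) :=
    ((by fun_prop : Continuous fun s : ℝ ↦ π * s ^ 2 * ‖g c‖).tendsto ρ).mono_left
      nhdsWithin_le_nhds
  refine le_of_tendsto hlim ?_
  filter_upwards [Ioo_mem_nhdsLT hρ] with s hs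
  calc π * s ^ 2 * ‖g c‖ ≤ ∫ z in ball c s, ‖g z‖ :=
        (hg.diffContOnCl_ball (closedBall_subset_ball hs.2)).pi_mul_sq_mul_norm_le_setIntegral_norm
          hs.1
    _ ≤ ∫ z in ball c ρ, ‖g z‖ :=
        setIntegral_mono_set hint (.of_forall fun _ ↦ norm_nonneg _)
          (ball_subset_ball hs.2.le).eventuallyLE

theorem DifferentiableOn.pi_mul_sq_mul_norm_sq_le_setIntegral_norm_sq {h : ℂ → ℂ}
    (hh : DifferentiableOn ℂ h (ball c ρ)) (hρ : 0 < ρ)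
    (hint : IntegrableOn (fun z ↦ ‖h z‖ ^ 2) (ball c ρ)) :
    π * ρ ^ 2 * ‖h c‖ ^ 2 ≤ ∫ z in ball c ρ, ‖h z‖ ^ 2 := by
  simpa only [Pi.pow_apply, norm_pow] using (hh.pow 2).pi_mul_sq_mul_norm_le_setIntegral_norm hρ
    (by simpa only [Pi.pow_apply, norm_pow] using hint)

end MeanValue

section ChangeOfVariables

variable {E : Type*} [NormedAddCommGroup E] [NormedSpace ℝ E] {s : Set ℂ} {φ φ' : ℂ → ℂ}

theorem Complex.det_restrictScalars_toSpanSingleton (a : ℂ) :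
    ((ContinuousLinearMap.toSpanSingleton ℂ a).restrictScalars ℝ).det = ‖a‖ ^ 2 := by
  simp [ContinuousLinearMap.det, LinearMap.det_restrictScalars, Algebra.norm_complex_eq,
    Complex.normSq_eq_norm_sq]

theorem integrableOn_image_iff_integrableOn_norm_deriv_sq_smul (hs : MeasurableSet s)
    (hφ : ∀ z ∈ s, HasDerivWithinAt φ (φ' z) s z) (hinj : InjOn φ s) (F : ℂ → E) :
    IntegrableOn F (φ '' s) ↔ IntegrableOn (fun z ↦ ‖φ' z‖ ^ 2 • F (φ z)) s := by
  simpa [Complex.det_restrictScalars_toSpanSingleton] using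
    integrableOn_image_iff_integrableOn_abs_det_fderiv_smul volume hs
      (fun z hz ↦ ((hφ z hz).hasFDerivWithinAt).restrictScalars ℝ) hinj F

theorem integral_image_eq_integral_norm_deriv_sq_smul (hs : MeasurableSet s)
    (hφ : ∀ z ∈ s, HasDerivWithinAt φ (φ' z) s z) (hinj : InjOn φ s) (F : ℂ → E) :
    ∫ z in φ '' s, F z = ∫ z in s, ‖φ' z‖ ^ 2 • F (φ z) := by
  simpa [Complex.det_restrictScalars_toSpanSingleton] using
    integral_image_eq_integral_abs_det_fderiv_smul volume hs
      (fun z hz ↦ ((hφ z hz).hasFDerivWithinAt).restrictScalars ℝ) hinj F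

theorem setIntegral_norm_deriv_sq_mul_comp_le {t : Set ℂ} {F : ℂ → ℝ} (hs : MeasurableSet s)
    (hφ : ∀ z ∈ s, HasDerivWithinAt φ (φ' z) s z) (hinj : InjOn φ s) (hst : MapsTo φ s t)
    (hF : IntegrableOn F t) (hF₀ : 0 ≤ᵐ[volume.restrict t] F) :
    ∫ z in s, ‖φ' z‖ ^ 2 * F (φ z) ≤ ∫ z in t, F z := by
  simpa only [← smul_eq_mul, ← integral_image_eq_integral_norm_deriv_sq_smul hs hφ hinj] using
    setIntegral_mono_set hF hF₀ hst.image_subset.eventuallyLE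

end ChangeOfVariables

theorem pi_mul_sq_mul_norm_deriv_comp_sq_le {f φ : ℂ → ℂ} {t : Set ℂ} {c : ℂ} {ρ : ℝ}
    (hρ : 0 < ρ) (hf : DifferentiableOn ℂ f t) (ht : IsOpen t)
    (hφ : DifferentiableOn ℂ φ (ball c ρ)) (hinj : InjOn φ (ball c ρ))
    (hmaps : MapsTo φ (ball c ρ) t) (hA : IntegrableOn (fun z ↦ ‖deriv f z‖ ^ 2) t) :
    π * ρ ^ 2 * (‖deriv f (φ c)‖ * ‖deriv φ c‖) ^ 2 ≤ ∫ z in t, ‖deriv f z‖ ^ 2 := by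
  have hφ' : ∀ w ∈ ball c ρ, HasDerivWithinAt φ (deriv φ w) (ball c ρ) w := fun w hw ↦
    (hφ.differentiableAt (isOpen_ball.mem_nhds hw)).hasDerivAt.hasDerivWithinAt
  set h : ℂ → ℂ := fun w ↦ deriv f (φ w) * deriv φ w
  have hnorm : ∀ w, ‖h w‖ ^ 2 = ‖deriv φ w‖ ^ 2 * ‖deriv f (φ w)‖ ^ 2 := fun w ↦ by
    rw [norm_mul, mul_pow, mul_comm]
  have hh : DifferentiableOn ℂ h (ball c ρ) :=
    ((hf.deriv ht).comp hφ hmaps).mul (hφ.deriv isOpen_ball)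
  have hint : IntegrableOn (fun w ↦ ‖h w‖ ^ 2) (ball c ρ) := by
    simpa only [hnorm, smul_eq_mul] using (integrableOn_image_iff_integrableOn_norm_deriv_sq_smul
      measurableSet_ball hφ' hinj _).1 (hA.mono_set hmaps.image_subset)
  calc π * ρ ^ 2 * (‖deriv f (φ c)‖ * ‖deriv φ c‖) ^ 2 = π * ρ ^ 2 * ‖h c‖ ^ 2 := by
        rw [norm_mul]
    _ ≤ ∫ w in ball c ρ, ‖h w‖ ^ 2 := hh.pi_mul_sq_mul_norm_sq_le_setIntegral_norm_sq hρ hint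
    _ = ∫ w in ball c ρ, ‖deriv φ w‖ ^ 2 * ‖deriv f (φ w)‖ ^ 2 := by simp only [hnorm]
    _ ≤ ∫ z in t, ‖deriv f z‖ ^ 2 := setIntegral_norm_deriv_sq_mul_comp_le measurableSet_ball hφ'
        hinj hmaps hA (.of_forall fun _ ↦ by positivity)

namespace Complex

noncomputable def mobiusDisc (a w : ℂ) : ℂ := (w + a) / (1 + conj a * w)

variable {a w : ℂ}

@[simp] theorem mobiusDisc_zero (a : ℂ) : mobiusDisc a 0 = a := by simp [mobiusDisc]

theorem norm_one_add_conj_mul_sq_sub (a w : ℂ) :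
    ‖1 + conj a * w‖ ^ 2 - ‖w + a‖ ^ 2 = (1 - ‖a‖ ^ 2) * (1 - ‖w‖ ^ 2) := by
  simp only [Complex.sq_norm, normSq_apply, add_re, add_im, mul_re, mul_im, one_re, one_im,
    conj_re, conj_im]
  ring

theorem one_add_conj_mul_ne_zero (ha : ‖a‖ < 1) (hw : ‖w‖ < 1) : 1 + conj a * w ≠ 0 := by
  intro h
  have : ‖conj a * w‖ = 1 := by rw [eq_neg_of_add_eq_zero_right h, norm_neg, norm_one]
  rw [norm_mul, norm_conj] at this
  nlinarith [norm_nonneg a, norm_nonneg w]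

theorem mapsTo_mobiusDisc (ha : ‖a‖ < 1) : MapsTo (mobiusDisc a) (ball 0 1) (ball 0 1) := by
  intro w hw
  rw [mem_ball_zero_iff] at hw ⊢
  have hlt : ‖w + a‖ ^ 2 < ‖1 + conj a * w‖ ^ 2 := by
    have hpos : 0 < (1 - ‖a‖ ^ 2) * (1 - ‖w‖ ^ 2) := by
      apply mul_pos <;> nlinarith [norm_nonneg a, norm_nonneg w]
    linarith [norm_one_add_conj_mul_sq_sub a w]
  rw [mobiusDisc, norm_div, div_lt_one (norm_pos_iff.2 (one_add_conj_mul_ne_zero ha hw))]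
  exact lt_of_pow_lt_pow_left₀ 2 (norm_nonneg _) hlt

theorem injOn_mobiusDisc (ha : ‖a‖ < 1) : InjOn (mobiusDisc a) (ball 0 1) := by
  intro w₁ hw₁ w₂ hw₂ heq
  rw [mem_ball_zero_iff] at hw₁ hw₂
  rw [mobiusDisc, mobiusDisc, div_eq_div_iff (one_add_conj_mul_ne_zero ha hw₁)
    (one_add_conj_mul_ne_zero ha hw₂)] at heq
  have hdet : (1 - (‖a‖ : ℂ) ^ 2) ≠ 0 := by
    norm_cast; nlinarith [norm_nonneg a]
  have : (w₁ - w₂) * (1 - (‖a‖ : ℂ) ^ 2) = 0 := by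
    rw [← conj_mul']; linear_combination heq
  exact sub_eq_zero.1 ((mul_eq_zero.1 this).resolve_right hdet)

theorem hasDerivAt_mobiusDisc (hw : 1 + conj a * w ≠ 0) :
    HasDerivAt (mobiusDisc a) ((1 - ‖a‖ ^ 2) / (1 + conj a * w) ^ 2) w := by
  refine (((hasDerivAt_id w).add_const a).div
    (((hasDerivAt_id w).const_mul (conj a)).const_add 1) hw).congr_deriv ?_
  simp only [id, ← conj_mul']
  field_simp
  ring

theorem differentiableOn_mobiusDisc (ha : ‖a‖ < 1) :
    DifferentiableOn ℂ (mobiusDisc a) (ball 0 1) := fun _ hw ↦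
  (hasDerivAt_mobiusDisc (one_add_conj_mul_ne_zero ha (mem_ball_zero_iff.1 hw)))
    |>.differentiableAt.differentiableWithinAt

theorem deriv_mobiusDisc_zero (a : ℂ) : deriv (mobiusDisc a) 0 = ((1 - ‖a‖ ^ 2 : ℝ) : ℂ) := by
  push_cast
  simpa using (hasDerivAt_mobiusDisc (a := a) (w := 0) (by simp)).deriv

end Complex

open Complex in
theorem stmt2 (f : ℂ → ℂ)
    (hf : AnalyticOn ℂ f (ball (0:ℂ) 1))
    (hA : IntegrableOn (fun z => ‖deriv f z‖ ^ 2) (ball (0:ℂ) 1)) :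
    ∀ z₀ ∈ ball (0:ℂ) 1,
      ‖deriv f z₀‖ * (1 - ‖z₀‖ ^ 2) / 2 ≤
        Real.sqrt ((∫ z in ball (0:ℂ) 1, ‖deriv f z‖ ^ 2) / (4 * π)) := by
  intro a ha
  rw [mem_ball_zero_iff] at ha
  have ha_sq : 0 ≤ 1 - ‖a‖ ^ 2 := by nlinarith [norm_nonneg a]
  have hbound := pi_mul_sq_mul_norm_deriv_comp_sq_le one_pos hf.differentiableOn isOpen_ball
    (differentiableOn_mobiusDisc ha) (injOn_mobiusDisc ha) (mapsTo_mobiusDisc ha) hA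
  rw [mobiusDisc_zero, deriv_mobiusDisc_zero, norm_real, Real.norm_of_nonneg ha_sq] at hbound
  rw [Real.le_sqrt (by positivity) (div_nonneg
    (setIntegral_nonneg measurableSet_ball fun _ _ ↦ by positivity) (by positivity)),
    le_div_iff₀ (by positivity)]
  nlinarith
end

section
/- Let f : 𝔻 → 𝔻 be analytic and let A_H = ∫_𝔻 |f'(z)|² · (2/(1−|f(z)|²))² dA(z) be the hyperbolic area of the image counting multiplicity, assumed finite. Then for every z₀ ∈ 𝔻, the hyperbolic-to-hyperbolic derivative norm satisfies |f'(z₀)| · (1−|z₀|²)/(1−|f(z₀)|²) ≤ (A_H/(4π))^{1/2}. -/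
/-!
Precomposing `f` with a disc automorphism sending `0` to `z₀` and postcomposing with one sending
`f z₀` to `0` changes neither the hyperbolic area (the change of variables factor `|φ'|²` is
absorbed by the density, and Möbius maps are hyperbolic isometries) nor the hyperbolic derivative
norm, so we may assume `z₀ = 0` and `f 0 = 0`. Then the density is `4 |f'(0)|²` at `0` and at
least `4 |f'|²` everywhere, and `|f'|²` satisfies the area sub-mean-value inequality
`π |f'(0)|² ≤ ∫_𝔻 |f'|²`: on each circle `|f'(0)|²` is at most the average of `|f'|²` by the
mean value property and Jensen's inequality, and integrating in polar coordinates gives the disc.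
-/

open MeasureTheory Metric Real ComplexConjugate

noncomputable def mobius (a z : ℂ) : ℂ := (z - a) / (1 - conj a * z)

section Mobius

variable {a z : ℂ}

lemma one_sub_conj_mul_ne_zero (ha : ‖a‖ < 1) (hz : ‖z‖ ≤ 1) : 1 - conj a * z ≠ 0 := by
  have : ‖conj a * z‖ < 1 := by
    rw [norm_mul, RCLike.norm_conj]
    nlinarith [norm_nonneg a, norm_nonneg z]
  rw [sub_ne_zero]
  rintro h
  simp [← h] at this

lemma sq_norm_sub_add_mul_eq_sq_norm_one_sub_conj_mul (a z : ℂ) :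
    ‖z - a‖ ^ 2 + (1 - ‖a‖ ^ 2) * (1 - ‖z‖ ^ 2) = ‖1 - conj a * z‖ ^ 2 := by
  simp only [Complex.sq_norm, Complex.normSq_apply, Complex.mul_re, Complex.mul_im, Complex.sub_re,
    Complex.sub_im, Complex.conj_re, Complex.conj_im, Complex.one_re, Complex.one_im]
  ring

lemma one_sub_sq_norm_mobius (ha : ‖a‖ < 1) (hz : ‖z‖ ≤ 1) :
    1 - ‖mobius a z‖ ^ 2 = (1 - ‖a‖ ^ 2) * (1 - ‖z‖ ^ 2) / ‖1 - conj a * z‖ ^ 2 := by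
  have hd : ‖1 - conj a * z‖ ^ 2 ≠ 0 := by simp [one_sub_conj_mul_ne_zero ha hz]
  rw [mobius, norm_div, div_pow, eq_div_iff hd, sub_mul, div_mul_cancel₀ _ hd,
    ← sq_norm_sub_add_mul_eq_sq_norm_one_sub_conj_mul]
  ring

lemma norm_mobius_lt_one (ha : ‖a‖ < 1) (hz : ‖z‖ < 1) : ‖mobius a z‖ < 1 := by
  have hd := one_sub_conj_mul_ne_zero ha hz.le
  have ha' : 0 < 1 - ‖a‖ ^ 2 := by nlinarith [norm_nonneg a]
  have hz' : 0 < 1 - ‖z‖ ^ 2 := by nlinarith [norm_nonneg z]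
  have : 0 < 1 - ‖mobius a z‖ ^ 2 := by
    rw [one_sub_sq_norm_mobius ha hz.le]
    positivity
  nlinarith [norm_nonneg (mobius a z)]

lemma hasDerivAt_mobius (h : 1 - conj a * z ≠ 0) :
    HasDerivAt (mobius a) ((1 - ‖a‖ ^ 2 : ℝ) / (1 - conj a * z) ^ 2) z := by
  have hnum : HasDerivAt (fun w => w - a) 1 z := (hasDerivAt_id z).sub_const a
  have hden : HasDerivAt (fun w => 1 - conj a * w) (-conj a) z := by
    simpa using ((hasDerivAt_id z).const_mul (conj a)).const_sub 1
  refine (hnum.div hden h).congr_deriv ?_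
  push_cast
  rw [← Complex.conj_mul']
  ring

lemma mobius_neg_mobius (ha : ‖a‖ < 1) (hz : ‖z‖ ≤ 1) : mobius (-a) (mobius a z) = z := by
  have hd := one_sub_conj_mul_ne_zero ha hz
  have ha' : (1 : ℂ) - conj a * a ≠ 0 := one_sub_conj_mul_ne_zero ha ha.le
  simp only [mobius, map_neg, neg_mul, sub_neg_eq_add]
  have hnum : (z - a) / (1 - conj a * z) + a = z * (1 - conj a * a) / (1 - conj a * z) := by
    rw [div_add' _ _ _ hd]; ring
  have hden : 1 + conj a * ((z - a) / (1 - conj a * z)) = (1 - conj a * a) / (1 - conj a * z) := by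
    rw [mul_div_assoc', add_div' _ _ _ hd]; ring
  rw [hnum, hden, div_div_div_cancel_right₀ hd, mul_div_cancel_right₀ _ ha']

lemma deriv_mobius (ha : ‖a‖ < 1) (hz : ‖z‖ ≤ 1) :
    deriv (mobius a) z = (1 - ‖a‖ ^ 2 : ℝ) / (1 - conj a * z) ^ 2 :=
  (hasDerivAt_mobius (one_sub_conj_mul_ne_zero ha hz)).deriv

lemma differentiableOn_mobius (ha : ‖a‖ < 1) : DifferentiableOn ℂ (mobius a) (ball 0 1) :=
  fun _ hz => (hasDerivAt_mobius (one_sub_conj_mul_ne_zero ha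
    (mem_ball_zero_iff.1 hz).le)).differentiableAt.differentiableWithinAt

lemma hasDerivAt_mobius_of_mem_ball (ha : ‖a‖ < 1) (hz : z ∈ ball 0 1) :
    HasDerivAt (mobius a) (deriv (mobius a) z) z :=
  (differentiableOn_mobius ha).differentiableAt (isOpen_ball.mem_nhds hz) |>.hasDerivAt

lemma mapsTo_mobius (ha : ‖a‖ < 1) : Set.MapsTo (mobius a) (ball 0 1) (ball 0 1) := fun _ hz => by
  rw [mem_ball_zero_iff] at hz ⊢
  exact norm_mobius_lt_one ha hz

lemma bijOn_mobius (ha : ‖a‖ < 1) : Set.BijOn (mobius a) (ball 0 1) (ball 0 1) := by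
  have ha' : ‖-a‖ < 1 := by rwa [norm_neg]
  refine Set.InvOn.bijOn (f' := mobius (-a)) ⟨fun z hz => ?_, fun w hw => ?_⟩
    (mapsTo_mobius ha) (mapsTo_mobius ha')
  · exact mobius_neg_mobius ha (mem_ball_zero_iff.1 hz).le
  · simpa using mobius_neg_mobius ha' (mem_ball_zero_iff.1 hw).le

/-- Möbius maps are isometries of the hyperbolic metric `2 |dz| / (1 - |z|²)`. -/
lemma norm_deriv_mobius_mul (ha : ‖a‖ < 1) (hz : ‖z‖ ≤ 1) :
    ‖deriv (mobius a) z‖ * (1 - ‖z‖ ^ 2) = 1 - ‖mobius a z‖ ^ 2 := by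
  rw [deriv_mobius ha hz, one_sub_sq_norm_mobius ha hz, norm_div, norm_pow, Complex.norm_real,
    Real.norm_of_nonneg (by nlinarith [norm_nonneg a])]
  ring

lemma mobius_zero (a : ℂ) : mobius a 0 = -a := by
  simp [mobius]

lemma norm_deriv_mobius_zero (ha : ‖a‖ < 1) : ‖deriv (mobius a) 0‖ = 1 - ‖a‖ ^ 2 := by
  have h := norm_deriv_mobius_mul (z := 0) ha (by simp)
  simpa [mobius_zero] using h

end Mobius

lemma abs_det_restrictScalars_toSpanSingleton (c : ℂ) :
    |((ContinuousLinearMap.toSpanSingleton ℂ c).restrictScalars ℝ).det| = ‖c‖ ^ 2 := by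
  simp [ContinuousLinearMap.det, LinearMap.det_restrictScalars, Algebra.norm_complex_apply,
    Complex.normSq_eq_norm_sq]

section ChangeOfVariables

variable {E : Type*} [NormedAddCommGroup E] [NormedSpace ℝ E] {s : Set ℂ} {φ φ' : ℂ → ℂ}

lemma integral_image_eq_integral_sq_norm_deriv_smul (hs : MeasurableSet s)
    (hφ : ∀ z ∈ s, HasDerivAt φ (φ' z) z) (hinj : s.InjOn φ) (g : ℂ → E) :
    ∫ z in φ '' s, g z = ∫ z in s, ‖φ' z‖ ^ 2 • g (φ z) := by
  rw [integral_image_eq_integral_abs_det_fderiv_smul volume hs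
    (fun z hz => ((hφ z hz).hasFDerivAt.restrictScalars ℝ).hasFDerivWithinAt) hinj]
  simp_rw [abs_det_restrictScalars_toSpanSingleton]

lemma integrableOn_image_iff_integrableOn_sq_norm_deriv_smul (hs : MeasurableSet s)
    (hφ : ∀ z ∈ s, HasDerivAt φ (φ' z) z) (hinj : s.InjOn φ) (g : ℂ → E) :
    IntegrableOn g (φ '' s) ↔ IntegrableOn (fun z => ‖φ' z‖ ^ 2 • g (φ z)) s := by
  rw [integrableOn_image_iff_integrableOn_abs_det_fderiv_smul volume hs
    (fun z hz => ((hφ z hz).hasFDerivAt.restrictScalars ℝ).hasFDerivWithinAt) hinj]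
  simp_rw [abs_det_restrictScalars_toSpanSingleton]

end ChangeOfVariables

lemma sq_norm_le_circleAverage_sq_norm {g : ℂ → ℂ} {c : ℂ} {R : ℝ}
    (hg : DiffContOnCl ℂ g (ball c |R|)) :
    ‖g c‖ ^ 2 ≤ circleAverage (fun z => ‖g z‖ ^ 2) c R := by
  rcases eq_or_ne R 0 with rfl | hR
  · simp
  have hcont : ContinuousOn g (sphere c |R|) := hg.continuousOn.mono <| by
    rw [closure_ball c (abs_ne_zero.2 hR)]
    exact sphere_subset_closedBall
  have hconvex : ConvexOn ℝ Set.univ (fun w : ℂ => ‖w‖ ^ 2) :=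
    (convexOn_norm convex_univ).pow (fun w _ => norm_nonneg w) 2
  have hint : CircleIntegrable g c R := hcont.circleIntegrable'
  have hint2 : CircleIntegrable (fun z => ‖g z‖ ^ 2) c R := (hcont.norm.pow 2).circleIntegrable'
  rw [← hg.circleAverage, circleAverage_eq_intervalAverage, circleAverage_eq_intervalAverage]
  have hμ : volume (Set.uIoc 0 (2 * π)) = ENNReal.ofReal (2 * π) := by
    rw [Set.uIoc_of_le two_pi_pos.le, Real.volume_Ioc, sub_zero]
  refine hconvex.map_set_average_le (continuous_norm.pow 2).continuousOn isClosed_univ ?_ ?_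
    (by simp) ?_ ?_
  · simp [hμ, pi_pos]
  · rw [hμ]; exact ENNReal.ofReal_ne_top
  · exact intervalIntegrable_iff.1 hint
  · exact intervalIntegrable_iff.1 hint2

lemma setIntegral_Ioo_neg_pi_pi_comp_circleMap {E : Type*} [NormedAddCommGroup E]
    [NormedSpace ℝ E] (f : ℂ → E) (c : ℂ) (R : ℝ) :
    ∫ θ in Set.Ioo (-π) π, f (circleMap c R θ) = (2 * π) • circleAverage f c R := by
  rw [circleAverage_eq_integral_add (-π), smul_smul, mul_inv_cancel₀ two_pi_pos.ne', one_smul,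
    intervalIntegral.integral_comp_add_right (fun θ => f (circleMap c R θ)), zero_add,
    show 2 * π + -π = π by ring, intervalIntegral.integral_of_le (by linarith [pi_pos]),
    integral_Ioc_eq_integral_Ioo]

section Disc

variable {R : ℝ}

lemma circleMap_zero_mem_ball {r θ : ℝ} (hr : r ∈ Set.Ioo 0 R) : circleMap 0 r θ ∈ ball 0 R := by
  rw [mem_ball_zero_iff, norm_circleMap_zero, abs_of_pos hr.1]
  exact hr.2

lemma ofReal_two_pi_mul_sq_norm_le_lintegral_circleMap {g : ℂ → ℂ}
    (hg : DifferentiableOn ℂ g (ball 0 R)) {r : ℝ} (hr : r ∈ Set.Ioo 0 R) :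
    ENNReal.ofReal (2 * π * ‖g 0‖ ^ 2) ≤
      ∫⁻ θ in Set.Ioo (-π) π, ENNReal.ofReal (‖g (circleMap 0 r θ)‖ ^ 2) := by
  have hgr : DiffContOnCl ℂ g (ball 0 |r|) :=
    hg.diffContOnCl_ball (by rw [abs_of_pos hr.1]; exact closedBall_subset_ball hr.2)
  have hcont : Continuous fun θ => ‖g (circleMap 0 r θ)‖ ^ 2 :=
    (hg.continuousOn.comp_continuous (continuous_circleMap 0 r)
      fun _ => circleMap_zero_mem_ball hr).norm.pow 2
  rw [← ofReal_integral_eq_lintegral_ofReal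
      (hcont.integrableOn_Icc.mono_set Set.Ioo_subset_Icc_self) (ae_of_all _ fun _ => sq_nonneg _),
    setIntegral_Ioo_neg_pi_pi_comp_circleMap (fun z => ‖g z‖ ^ 2), smul_eq_mul]
  gcongr
  exact sq_norm_le_circleAverage_sq_norm hgr

/-- Polar coordinates, in `ℝ≥0∞` so that Tonelli needs no integrability on the polar rectangle. -/
lemma lintegral_Ioo_mul_lintegral_circleMap_le_setLIntegral_ball {u : ℂ → ℝ}
    (hu : ContinuousOn u (ball 0 R)) :
    ∫⁻ r in Set.Ioo 0 R, ENNReal.ofReal r *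
        ∫⁻ θ in Set.Ioo (-π) π, ENNReal.ofReal (u (circleMap 0 r θ))
      ≤ ∫⁻ z in ball 0 R, ENNReal.ofReal (u z) := by
  set F : ℂ → ENNReal := fun z => ENNReal.ofReal (u z)
  have hS : MeasurableSet (Set.Ioo 0 R ×ˢ Set.Ioo (-π) π) :=
    measurableSet_Ioo.prod measurableSet_Ioo
  have hmeas : AEMeasurable (fun p : ℝ × ℝ => ENNReal.ofReal p.1 * F (circleMap 0 p.1 p.2))
      ((volume.prod volume).restrict (Set.Ioo 0 R ×ˢ Set.Ioo (-π) π)) :=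
    measurable_fst.ennreal_ofReal.aemeasurable.mul <| ContinuousOn.aemeasurable
      (hu.comp circleMap.continuous.continuousOn fun _ hp => circleMap_zero_mem_ball hp.1) hS
      |>.ennreal_ofReal
  simp_rw [← lintegral_const_mul' _ _ ENNReal.ofReal_ne_top]
  rw [← setLIntegral_prod _ hmeas, ← Measure.volume_eq_prod,
    ← lintegral_indicator measurableSet_ball, ← Complex.lintegral_comp_polarCoord_symm, polarCoord_target]
  calc _ = ∫⁻ p in Set.Ioo 0 R ×ˢ Set.Ioo (-π) π,
        ENNReal.ofReal p.1 • (ball 0 R).indicator F (Complex.polarCoord.symm p) := by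
        refine setLIntegral_congr_fun hS fun p hp => ?_
        have hpolar : Complex.polarCoord.symm p = circleMap 0 p.1 p.2 := by
          simp [Complex.polarCoord_symm_apply, circleMap, Complex.exp_mul_I]
        rw [hpolar, Set.indicator_of_mem (circleMap_zero_mem_ball hp.1), smul_eq_mul]
    _ ≤ _ := lintegral_mono_set (Set.prod_mono Set.Ioo_subset_Ioi_self le_rfl)

lemma lintegral_Ioo_ofReal_mul_ofReal (hR : 0 ≤ R) {c : ℝ} (hc : 0 ≤ c) :
    ∫⁻ r in Set.Ioo 0 R, ENNReal.ofReal r * ENNReal.ofReal c = ENNReal.ofReal (R ^ 2 / 2 * c) := by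
  have hint : IntegrableOn (fun r => r * c) (Set.Ioo 0 R) :=
    (continuous_id.mul continuous_const).integrableOn_Icc.mono_set Set.Ioo_subset_Icc_self
  simp_rw [← ENNReal.ofReal_mul' hc]
  rw [← ofReal_integral_eq_lintegral_ofReal hint, ← integral_Ioc_eq_integral_Ioo,
    ← intervalIntegral.integral_of_le hR, intervalIntegral.integral_mul_const, integral_id]
  · norm_num
  · filter_upwards [ae_restrict_mem measurableSet_Ioo] with r hr
    exact mul_nonneg hr.1.le hc

lemma pi_mul_sq_mul_sq_norm_le_setIntegral_ball {g : ℂ → ℂ} (hR : 0 ≤ R)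
    (hg : DifferentiableOn ℂ g (ball 0 R))
    (hint : IntegrableOn (fun z => ‖g z‖ ^ 2) (ball 0 R)) :
    π * R ^ 2 * ‖g 0‖ ^ 2 ≤ ∫ z in ball 0 R, ‖g z‖ ^ 2 := by
  rw [← ENNReal.ofReal_le_ofReal_iff (setIntegral_nonneg measurableSet_ball fun _ _ => sq_nonneg _),
    ofReal_integral_eq_lintegral_ofReal hint (ae_of_all _ fun _ => sq_nonneg _)]
  calc ENNReal.ofReal (π * R ^ 2 * ‖g 0‖ ^ 2)
      = ∫⁻ r in Set.Ioo 0 R, ENNReal.ofReal r * ENNReal.ofReal (2 * π * ‖g 0‖ ^ 2) := by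
        rw [lintegral_Ioo_ofReal_mul_ofReal hR (by positivity)]
        ring_nf
    _ ≤ ∫⁻ r in Set.Ioo 0 R, ENNReal.ofReal r *
          ∫⁻ θ in Set.Ioo (-π) π, ENNReal.ofReal (‖g (circleMap 0 r θ)‖ ^ 2) :=
        setLIntegral_mono' measurableSet_Ioo fun r hr => by
          gcongr
          exact ofReal_two_pi_mul_sq_norm_le_lintegral_circleMap hg hr
    _ ≤ _ := lintegral_Ioo_mul_lintegral_circleMap_le_setLIntegral_ball (hg.continuousOn.norm.pow 2)

end Disc

noncomputable def hyperbolicAreaDensity (f : ℂ → ℂ) (z : ℂ) : ℝ :=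
  ‖deriv f z‖ ^ 2 * (2 / (1 - ‖f z‖ ^ 2)) ^ 2

section HyperbolicAreaDensity

variable {f g φ : ℂ → ℂ} {z : ℂ}

lemma hyperbolicAreaDensity_comp (hg : DifferentiableAt ℂ g (φ z)) (hφ : DifferentiableAt ℂ φ z) :
    hyperbolicAreaDensity (g ∘ φ) z = ‖deriv φ z‖ ^ 2 * hyperbolicAreaDensity g (φ z) := by
  simp only [hyperbolicAreaDensity, deriv_comp z hg hφ, Function.comp_apply, norm_mul]
  ring

lemma hyperbolicAreaDensity_mobius_comp {a : ℂ} (ha : ‖a‖ < 1) (hg : DifferentiableAt ℂ g z)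
    (hgz : ‖g z‖ < 1) :
    hyperbolicAreaDensity (mobius a ∘ g) z = hyperbolicAreaDensity g z := by
  have hd := (hasDerivAt_mobius (one_sub_conj_mul_ne_zero ha hgz.le)).differentiableAt
  have hpos : 0 < 1 - ‖mobius a (g z)‖ ^ 2 := by
    nlinarith [norm_mobius_lt_one ha hgz, norm_nonneg (mobius a (g z))]
  have hpos' : 0 < 1 - ‖g z‖ ^ 2 := by nlinarith [norm_nonneg (g z)]
  simp only [hyperbolicAreaDensity, deriv_comp z hd hg, Function.comp_apply, norm_mul,
    ← norm_deriv_mobius_mul ha hgz.le] at hpos ⊢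
  have hX : 0 < ‖deriv (mobius a) (g z)‖ := pos_of_mul_pos_left hpos hpos'.le
  field_simp

lemma four_mul_sq_norm_deriv_le_hyperbolicAreaDensity (hz : ‖f z‖ < 1) :
    4 * ‖deriv f z‖ ^ 2 ≤ hyperbolicAreaDensity f z := by
  have hpos : 0 < 1 - ‖f z‖ ^ 2 := by nlinarith [norm_nonneg (f z)]
  have hle : 1 - ‖f z‖ ^ 2 ≤ 1 := by nlinarith [norm_nonneg (f z)]
  rw [hyperbolicAreaDensity, div_pow, mul_comm]
  gcongr
  calc (4 : ℝ) = 2 ^ 2 / 1 := by norm_num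
    _ ≤ 2 ^ 2 / (1 - ‖f z‖ ^ 2) ^ 2 := by gcongr; nlinarith

lemma sq_hyperbolic_norm_deriv (f : ℂ → ℂ) (z : ℂ) :
    (‖deriv f z‖ * (1 - ‖z‖ ^ 2) / (1 - ‖f z‖ ^ 2)) ^ 2 =
      (1 - ‖z‖ ^ 2) ^ 2 * hyperbolicAreaDensity f z / 4 := by
  rw [hyperbolicAreaDensity]
  ring

lemma pi_mul_hyperbolicAreaDensity_zero_le_integral (hf : DifferentiableOn ℂ f (ball 0 1))
    (hmaps : Set.MapsTo f (ball 0 1) (ball 0 1)) (h0 : f 0 = 0)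
    (hint : IntegrableOn (hyperbolicAreaDensity f) (ball 0 1)) :
    π * hyperbolicAreaDensity f 0 ≤ ∫ z in ball 0 1, hyperbolicAreaDensity f z := by
  have hle : ∀ z ∈ ball (0 : ℂ) 1, 4 * ‖deriv f z‖ ^ 2 ≤ hyperbolicAreaDensity f z := fun z hz =>
    four_mul_sq_norm_deriv_le_hyperbolicAreaDensity (mem_ball_zero_iff.1 (hmaps hz))
  have hderiv : DifferentiableOn ℂ (deriv f) (ball 0 1) := hf.deriv isOpen_ball
  have hint' : IntegrableOn (fun z => ‖deriv f z‖ ^ 2) (ball 0 1) := by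
    refine (hint.div_const 4).mono' ((hderiv.continuousOn.norm.pow 2).aestronglyMeasurable
      measurableSet_ball) ?_
    filter_upwards [ae_restrict_mem measurableSet_ball] with z hz
    rw [Real.norm_of_nonneg (sq_nonneg _), le_div_iff₀ four_pos, mul_comm]
    exact hle z hz
  have hval : hyperbolicAreaDensity f 0 = 4 * ‖deriv f 0‖ ^ 2 := by
    rw [hyperbolicAreaDensity, h0, norm_zero]
    ring
  calc π * hyperbolicAreaDensity f 0 = 4 * (π * 1 ^ 2 * ‖deriv f 0‖ ^ 2) := by rw [hval]; ring
    _ ≤ 4 * ∫ z in ball 0 1, ‖deriv f z‖ ^ 2 := by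
      gcongr
      exact pi_mul_sq_mul_sq_norm_le_setIntegral_ball zero_le_one hderiv hint'
    _ = ∫ z in ball 0 1, 4 * ‖deriv f z‖ ^ 2 := (integral_const_mul _ _).symm
    _ ≤ _ := setIntegral_mono_on (hint'.const_mul 4) hint measurableSet_ball hle

end HyperbolicAreaDensity

section ConformalInvariance

variable {f : ℂ → ℂ} {a b : ℂ}

lemma setIntegral_ball_comp_mobius (ha : ‖a‖ < 1) (h : ℂ → ℝ) :
    ∫ z in ball 0 1, ‖deriv (mobius a) z‖ ^ 2 * h (mobius a z) = ∫ z in ball 0 1, h z := by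
  conv_rhs => rw [← (bijOn_mobius ha).image_eq]
  exact (integral_image_eq_integral_sq_norm_deriv_smul measurableSet_ball
    (fun _ => hasDerivAt_mobius_of_mem_ball ha) (bijOn_mobius ha).injOn h).symm

lemma integrableOn_ball_comp_mobius_iff (ha : ‖a‖ < 1) (h : ℂ → ℝ) :
    IntegrableOn (fun z => ‖deriv (mobius a) z‖ ^ 2 * h (mobius a z)) (ball 0 1) ↔
      IntegrableOn h (ball 0 1) := by
  conv_rhs => rw [← (bijOn_mobius ha).image_eq]
  exact (integrableOn_image_iff_integrableOn_sq_norm_deriv_smul measurableSet_ball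
    (fun _ => hasDerivAt_mobius_of_mem_ball ha) (bijOn_mobius ha).injOn h).symm

lemma mapsTo_mobius_comp_comp_mobius (ha : ‖a‖ < 1) (hb : ‖b‖ < 1)
    (hmaps : Set.MapsTo f (ball 0 1) (ball 0 1)) :
    Set.MapsTo (mobius b ∘ f ∘ mobius a) (ball 0 1) (ball 0 1) :=
  (mapsTo_mobius hb).comp (hmaps.comp (mapsTo_mobius ha))

lemma differentiableOn_mobius_comp_comp_mobius (ha : ‖a‖ < 1) (hb : ‖b‖ < 1)
    (hf : DifferentiableOn ℂ f (ball 0 1)) (hmaps : Set.MapsTo f (ball 0 1) (ball 0 1)) :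
    DifferentiableOn ℂ (mobius b ∘ f ∘ mobius a) (ball 0 1) :=
  (differentiableOn_mobius hb).comp (hf.comp (differentiableOn_mobius ha) (mapsTo_mobius ha))
    (hmaps.comp (mapsTo_mobius ha))

lemma hyperbolicAreaDensity_mobius_comp_comp_mobius (ha : ‖a‖ < 1) (hb : ‖b‖ < 1)
    (hf : DifferentiableOn ℂ f (ball 0 1)) (hmaps : Set.MapsTo f (ball 0 1) (ball 0 1)) :
    Set.EqOn (hyperbolicAreaDensity (mobius b ∘ f ∘ mobius a))
      (fun z => ‖deriv (mobius a) z‖ ^ 2 * hyperbolicAreaDensity f (mobius a z)) (ball 0 1) := by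
  intro z hz
  have haz := mapsTo_mobius ha hz
  have hfa := (hf.comp (differentiableOn_mobius ha) (mapsTo_mobius ha)).differentiableAt
    (isOpen_ball.mem_nhds hz)
  rw [hyperbolicAreaDensity_mobius_comp hb hfa (mem_ball_zero_iff.1 (hmaps haz)),
    hyperbolicAreaDensity_comp (hf.differentiableAt (isOpen_ball.mem_nhds haz))
      (hasDerivAt_mobius_of_mem_ball ha hz).differentiableAt]

lemma integrableOn_hyperbolicAreaDensity_mobius_comp_comp_mobius_iff (ha : ‖a‖ < 1)
    (hb : ‖b‖ < 1) (hf : DifferentiableOn ℂ f (ball 0 1))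
    (hmaps : Set.MapsTo f (ball 0 1) (ball 0 1)) :
    IntegrableOn (hyperbolicAreaDensity (mobius b ∘ f ∘ mobius a)) (ball 0 1) ↔
      IntegrableOn (hyperbolicAreaDensity f) (ball 0 1) := by
  rw [integrableOn_congr_fun (hyperbolicAreaDensity_mobius_comp_comp_mobius ha hb hf hmaps)
    measurableSet_ball, integrableOn_ball_comp_mobius_iff ha]

lemma integral_hyperbolicAreaDensity_mobius_comp_comp_mobius (ha : ‖a‖ < 1) (hb : ‖b‖ < 1)
    (hf : DifferentiableOn ℂ f (ball 0 1)) (hmaps : Set.MapsTo f (ball 0 1) (ball 0 1)) :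
    ∫ z in ball 0 1, hyperbolicAreaDensity (mobius b ∘ f ∘ mobius a) z =
      ∫ z in ball 0 1, hyperbolicAreaDensity f z := by
  rw [setIntegral_congr_fun measurableSet_ball
    (hyperbolicAreaDensity_mobius_comp_comp_mobius ha hb hf hmaps), setIntegral_ball_comp_mobius ha]

end ConformalInvariance

theorem stmt3 (f : ℂ → ℂ)
    (hf : AnalyticOn ℂ f (ball (0:ℂ) 1))
    (hmaps : Set.MapsTo f (ball (0:ℂ) 1) (ball (0:ℂ) 1))
    (hA : IntegrableOn
      (fun z => ‖deriv f z‖ ^ 2 * (2 / (1 - ‖f z‖ ^ 2)) ^ 2) (ball (0:ℂ) 1)) :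
    ∀ z₀ ∈ ball (0:ℂ) 1,
      ‖deriv f z₀‖ * (1 - ‖z₀‖ ^ 2) / (1 - ‖f z₀‖ ^ 2) ≤
        Real.sqrt
          ((∫ z in ball (0:ℂ) 1, ‖deriv f z‖ ^ 2 * (2 / (1 - ‖f z‖ ^ 2)) ^ 2)
            / (4 * π)) := by
  intro z₀ hz₀
  change IntegrableOn (hyperbolicAreaDensity f) _ at hA
  change _ ≤ √((∫ z in ball (0:ℂ) 1, hyperbolicAreaDensity f z) / (4 * π))
  have ha : ‖-z₀‖ < 1 := by rwa [norm_neg, ← mem_ball_zero_iff]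
  have hb : ‖f z₀‖ < 1 := mem_ball_zero_iff.1 (hmaps hz₀)
  have hfd := hf.differentiableOn
  have hkey := pi_mul_hyperbolicAreaDensity_zero_le_integral
    (differentiableOn_mobius_comp_comp_mobius ha hb hfd hmaps)
    (mapsTo_mobius_comp_comp_mobius ha hb hmaps) (by simp [mobius])
    ((integrableOn_hyperbolicAreaDensity_mobius_comp_comp_mobius_iff ha hb hfd hmaps).2 hA)
  rw [integral_hyperbolicAreaDensity_mobius_comp_comp_mobius ha hb hfd hmaps,
    hyperbolicAreaDensity_mobius_comp_comp_mobius ha hb hfd hmaps (mem_ball_self one_pos)] at hkey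
  beta_reduce at hkey
  rw [norm_deriv_mobius_zero ha, norm_neg, mobius_zero, neg_neg] at hkey
  apply Real.le_sqrt_of_sq_le
  rw [sq_hyperbolic_norm_deriv, le_div_iff₀ (by positivity)]
  linarith
end

section
/- For each 0 < ε < 1, the analytic map f : 𝔻 → 𝔻, f(z) = εz, has hyperbolic-to-hyperbolic derivative norm ε at 0, and the hyperbolic area of its image 𝔻_ε = {z : |z| < ε} equals 4πε²/(1−ε²). In particular, the ratio of the squared derivative norm at 0 to the image's hyperbolic area tends to 1/(4π) as ε → 0, so the constant 1/(4π) in the inequality ‖f'(0)‖²_{H→H} ≤ A_H(f(𝔻))/(4π) is best possible. -/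
/-!
In polar coordinates the hyperbolic area of `{|z| < ε}` is `2π ∫₀^ε r (2 / (1 - r²))² dr`, and
`r (2 / (1 - r²))²` is the derivative of `2 / (1 - r²)`; hence the area is
`2π (2 / (1 - ε²) - 2) = 4πε² / (1 - ε²)`. Since `z ↦ εz` has derivative norm `ε` at `0`, the ratio
in question is `(1 - ε²) / (4π)`, which tends to `1 / (4π)`.
-/

open MeasureTheory Metric Real Filter Set Topology

namespace MeasureTheory

variable {E F : Type*} [NormedAddCommGroup E] [NormedSpace ℝ E] [MeasurableSpace E] [BorelSpace E]
  [FiniteDimensional ℝ E] [Nontrivial E] [NormedAddCommGroup F] [NormedSpace ℝ F]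
  (μ : Measure E) [μ.IsAddHaarMeasure]

theorem setIntegral_ball_fun_norm_addHaar (f : ℝ → F) (r : ℝ) :
    ∫ x in ball (0 : E) r, f ‖x‖ ∂μ = Module.finrank ℝ E • μ.real (ball 0 1) •
      ∫ y in Ioo 0 r, y ^ (Module.finrank ℝ E - 1) • f y := by
  have radial : (ball (0 : E) r).indicator (fun x => f ‖x‖) = fun x => (Iio r).indicator f ‖x‖ := by
    ext x
    simp [indicator]
  rw [← integral_indicator measurableSet_ball, radial, integral_fun_norm_addHaar,
    show Ioo (0 : ℝ) r = Ioi 0 ∩ Iio r by ext; simp, ← setIntegral_indicator measurableSet_Iio]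
  congr 3
  ext y
  by_cases hy : y < r <;> simp [indicator, hy]

end MeasureTheory

theorem Complex.setIntegral_ball_fun_norm {F : Type*} [NormedAddCommGroup F] [NormedSpace ℝ F]
    (f : ℝ → F) (r : ℝ) :
    ∫ z in ball (0 : ℂ) r, f ‖z‖ = (2 * π) • ∫ y in Ioo 0 r, y • f y := by
  rw [setIntegral_ball_fun_norm_addHaar, Complex.finrank_real_complex, measureReal_def,
    Complex.volume_ball]
  norm_num [← smul_assoc]

theorem hasDerivAt_two_div_one_sub_sq {r : ℝ} (hr : 1 - r ^ 2 ≠ 0) :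
    HasDerivAt (fun t : ℝ => 2 / (1 - t ^ 2)) (r * (2 / (1 - r ^ 2)) ^ 2) r := by
  have hden : HasDerivAt (fun t : ℝ => 1 - t ^ 2) (-(2 * r)) r := by
    simpa using (hasDerivAt_pow 2 r).const_sub 1
  refine ((hasDerivAt_const r (2 : ℝ)).div hden hr).congr_deriv ?_
  field_simp
  ring

theorem integral_mul_two_div_one_sub_sq_sq {ε : ℝ} (hε : |ε| < 1) :
    ∫ r in 0..ε, r * (2 / (1 - r ^ 2)) ^ 2 = 2 / (1 - ε ^ 2) - 2 := by
  have hden : ∀ r ∈ uIcc 0 ε, 1 - r ^ 2 ≠ 0 := by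
    intro r hr
    have := abs_lt.1 hε
    rcases mem_uIcc.1 hr with h | h <;> nlinarith
  have hcont : ContinuousOn (fun r : ℝ => r * (2 / (1 - r ^ 2)) ^ 2) (uIcc 0 ε) := by
    fun_prop (disch := assumption)
  rw [intervalIntegral.integral_eq_sub_of_hasDerivAt
    (fun r hr => hasDerivAt_two_div_one_sub_sq (hden r hr)) hcont.intervalIntegrable]
  norm_num

theorem integral_ball_two_div_one_sub_norm_sq_sq {ε : ℝ} (hε₀ : 0 ≤ ε) (hε₁ : ε < 1) :
    ∫ z in ball (0 : ℂ) ε, (2 / (1 - ‖z‖ ^ 2)) ^ 2 = 4 * π * ε ^ 2 / (1 - ε ^ 2) := by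
  rw [Complex.setIntegral_ball_fun_norm (fun r => (2 / (1 - r ^ 2)) ^ 2),
    ← integral_Ioc_eq_integral_Ioo, ← intervalIntegral.integral_of_le hε₀]
  simp only [smul_eq_mul]
  rw [integral_mul_two_div_one_sub_sq_sq (by rwa [abs_of_nonneg hε₀])]
  have : 1 - ε ^ 2 ≠ 0 := by nlinarith
  field_simp
  ring

theorem tendsto_sq_div_four_pi_mul_sq_div_one_sub_sq :
    Tendsto (fun ε : ℝ => ε ^ 2 / (4 * π * ε ^ 2 / (1 - ε ^ 2))) (𝓝[>] 0) (𝓝 (1 / (4 * π))) := by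
  have hlim : Tendsto (fun ε : ℝ => (1 - ε ^ 2) / (4 * π)) (𝓝[>] 0) (𝓝 (1 / (4 * π))) := by
    simpa using ((by fun_prop : Continuous fun ε : ℝ => (1 - ε ^ 2) / (4 * π)).tendsto 0).mono_left
      nhdsWithin_le_nhds
  refine hlim.congr' ?_
  filter_upwards [Ioo_mem_nhdsGT one_pos] with ε ⟨hε₀, hε₁⟩
  have : 1 - ε ^ 2 ≠ 0 := by nlinarith
  field_simp

theorem stmt5 :
    (∀ ε : ℝ, 0 < ε → ε < 1 →
      (let f : ℂ → ℂ := fun z => (ε : ℂ) * z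
       ‖deriv f 0‖ * (1 - ‖(0:ℂ)‖ ^ 2) / (1 - ‖f 0‖ ^ 2) = ε) ∧
      (∫ z in ball (0:ℂ) ε, (2 / (1 - ‖z‖ ^ 2)) ^ 2) =
        4 * π * ε ^ 2 / (1 - ε ^ 2)) ∧
    Tendsto (fun ε : ℝ => ε ^ 2 / (4 * π * ε ^ 2 / (1 - ε ^ 2)))
      (nhdsWithin 0 (Set.Ioi 0)) (nhds (1 / (4 * π))) := by
  refine ⟨fun ε hε₀ hε₁ => ⟨?_, integral_ball_two_div_one_sub_norm_sq_sq hε₀.le hε₁⟩,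
    tendsto_sq_div_four_pi_mul_sq_div_one_sub_sq⟩
  simp [abs_of_pos hε₀]
end

section
/- There is no constant c > 0 such that every analytic map f : 𝔻 → ℂ with spherical image area ∫_𝔻 |f'|² λ_S(f)² dA ≤ 4π satisfies |f'(0)| λ_S(f(0))/2 ≤ c · (∫_𝔻 |f'|² λ_S(f)² dA)^{1/2}. Indeed, for each λ ≠ 0, the map f(z) = λ z/(1−z)² is univalent with f(0)=0, has spherical image area at most 4π, and has |f'(0)| λ_S(f(0))/2 = |λ|, which is unbounded as |λ| → ∞. -/
/-!
The maps `z ↦ a * z` are univalent, so their spherical image area is at most the area `4π` of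
the Riemann sphere, while their spherical derivative at `0` is `‖a‖`, which is unbounded.
The area bound comes from `∫_ℂ (2 / (1 + |w|²))² dA = 4π` after the substitution `w = a z`.
-/

open MeasureTheory Metric Real Set Filter Module Topology

lemma integrable_two_div_one_add_norm_sq_sq {E : Type*} [NormedAddCommGroup E]
    [NormedSpace ℝ E] [FiniteDimensional ℝ E] [MeasurableSpace E] [BorelSpace E]
    (μ : Measure E) [μ.IsAddHaarMeasure] (hE : finrank ℝ E < 4) :
    Integrable (fun x : E => (2 / (1 + ‖x‖ ^ 2)) ^ 2) μ := by
  refine ((integrable_rpow_neg_one_add_norm_sq (μ := μ) (r := 4) (by exact_mod_cast hE)).const_mul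
    4).congr (Eventually.of_forall fun x => ?_)
  have hpos : (0 : ℝ) < 1 + ‖x‖ ^ 2 := by positivity
  simp only [show (-4 / 2 : ℝ) = -(2 : ℕ) by norm_num, rpow_neg hpos.le, rpow_natCast, div_pow]
  ring

lemma integral_Ioi_mul_two_div_one_add_sq_sq :
    ∫ r in Ioi (0 : ℝ), r * (2 / (1 + r ^ 2)) ^ 2 = 2 := by
  have hpos : ∀ r : ℝ, (0 : ℝ) < 1 + r ^ 2 := fun r => by positivity
  have hderiv : ∀ r ∈ Ici (0 : ℝ),
      HasDerivAt (fun r => -2 * (1 + r ^ 2)⁻¹) (r * (2 / (1 + r ^ 2)) ^ 2) r := by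
    intro r _
    refine ((((hasDerivAt_pow 2 r).const_add 1).inv (hpos r).ne').const_mul
      (-2 : ℝ)).congr_deriv ?_
    field_simp
    ring
  have hlim : Tendsto (fun r : ℝ => -2 * (1 + r ^ 2)⁻¹) atTop (𝓝 0) := by
    simpa using (tendsto_atTop_add_const_left _ 1
      (tendsto_pow_atTop two_ne_zero)).inv_tendsto_atTop.const_mul (-2 : ℝ)
  rw [integral_Ioi_of_hasDerivAt_of_nonneg' hderiv
    (fun r hr => by have := le_of_lt hr.out; positivity) hlim]
  norm_num

lemma integral_two_div_one_add_norm_sq_sq_complex :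
    ∫ z : ℂ, (2 / (1 + ‖z‖ ^ 2)) ^ 2 = 4 * π := by
  rw [integral_fun_norm_addHaar volume (fun r : ℝ => (2 / (1 + r ^ 2)) ^ 2)]
  simp only [Complex.finrank_real_complex, Complex.volume_ball, measureReal_def, smul_eq_mul]
  norm_num [integral_Ioi_mul_two_div_one_add_sq_sq]
  ring

lemma setIntegral_norm_sq_mul_two_div_one_add_norm_mul_sq_sq_le (a : ℂ) (s : Set ℂ) :
    ∫ z in s, ‖a‖ ^ 2 * (2 / (1 + ‖a * z‖ ^ 2)) ^ 2 ≤ 4 * π := by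
  rcases eq_or_ne a 0 with rfl | ha
  · simp [pi_pos.le]
  have hscale : ∀ z : ℂ, ‖a * z‖ = ‖‖a‖ • z‖ := by simp
  have hint : Integrable (fun z : ℂ => (2 / (1 + ‖‖a‖ • z‖ ^ 2)) ^ 2) :=
    (integrable_two_div_one_add_norm_sq_sq volume (by simp)).comp_smul (norm_ne_zero_iff.2 ha)
  calc ∫ z in s, ‖a‖ ^ 2 * (2 / (1 + ‖a * z‖ ^ 2)) ^ 2
      ≤ ∫ z, ‖a‖ ^ 2 * (2 / (1 + ‖‖a‖ • z‖ ^ 2)) ^ 2 := by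
        simp only [hscale]
        exact setIntegral_le_integral (hint.const_mul _)
          (Eventually.of_forall fun z => by positivity)
    _ = 4 * π := by
        rw [integral_const_mul, Measure.integral_comp_smul_of_nonneg volume
          (fun z : ℂ => (2 / (1 + ‖z‖ ^ 2)) ^ 2) ‖a‖ (hR := norm_nonneg a),
          integral_two_div_one_add_norm_sq_sq_complex, Complex.finrank_real_complex, smul_eq_mul,
          ← mul_assoc, mul_inv_cancel₀ (pow_ne_zero 2 (norm_ne_zero_iff.2 ha)), one_mul]

theorem stmt8 :
    ¬ ∃ c : ℝ, 0 < c ∧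
      ∀ f : ℂ → ℂ, AnalyticOn ℂ f (ball (0:ℂ) 1) →
        (∫ z in ball (0:ℂ) 1, ‖deriv f z‖ ^ 2 * (2 / (1 + ‖f z‖ ^ 2)) ^ 2)
            ≤ 4 * π →
        ‖deriv f 0‖ * (2 / (1 + ‖f 0‖ ^ 2)) / 2 ≤
          c * Real.sqrt
            (∫ z in ball (0:ℂ) 1,
              ‖deriv f z‖ ^ 2 * (2 / (1 + ‖f z‖ ^ 2)) ^ 2) := by
  rintro ⟨c, hc, h⟩
  set a : ℂ := ((c * √(4 * π) + 1 : ℝ) : ℂ)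
  have hderiv : deriv (fun z => a * z) = fun _ => a := by
    ext z; simp
  have harea := setIntegral_norm_sq_mul_two_div_one_add_norm_mul_sq_sq_le a (ball 0 1)
  have hbound := h (fun z => a * z) (analyticOnNhd_const.mul analyticOnNhd_id).analyticOn
  simp only [hderiv, mul_zero, norm_zero] at hbound
  have hnorm : ‖a‖ = c * √(4 * π) + 1 := by
    simp only [a, Complex.norm_real, norm_of_nonneg (by positivity : 0 ≤ c * √(4 * π) + 1)]
  have := (hbound harea).trans (mul_le_mul_of_nonneg_left (sqrt_le_sqrt harea) hc.le)
  norm_num [hnorm] at this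
end

section
/- Let f₀, f_∞ : 𝔻 → ℂ be analytic with |f₀(z)|² + |f_∞(z)|² ≤ 1 and |f₀(z)|² + |f_∞(z)|² > δ² for all z ∈ 𝔻, where δ > 0, and suppose f_∞ is nowhere zero so that f = f₀/f_∞ is analytic on 𝔻. Then for every z ∈ 𝔻 the hyperbolic-to-spherical derivative norm satisfies (2|f'(z)|/(1+|f(z)|²)) · (1−|z|²)/2 ≤ 2/δ. -/
open MeasureTheory Metric Real

/-!
Write `W = f₀' f_∞ - f₀ f_∞'` and `‖F‖ = (|f₀|² + |f_∞|²)^{1/2}`. The quantity to be bounded is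
`|W(z)| (1 - |z|²) / ‖F(z)‖²`. For fixed `z`, the function `w ↦ f₀(w) f_∞(z) - f_∞(w) f₀(z)` vanishes
at `z`, has derivative `W(z)` there, and by Cauchy–Schwarz in `ℂ²` is bounded by `‖F(w)‖ ‖F(z)‖ ≤ ‖F(z)‖`.
The Schwarz lemma on the disc of radius `1 - |z|` about `z` gives `|W(z)| (1 - |z|) ≤ ‖F(z)‖`,
so the quantity is at most `2 / ‖F(z)‖ < 2 / δ`.
-/

open Set Filter Topology

lemma norm_mul_sub_mul_le_sqrt_mul_sqrt (a b c d : ℂ) :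
    ‖a * d - b * c‖ ≤ √(‖a‖ ^ 2 + ‖b‖ ^ 2) * √(‖c‖ ^ 2 + ‖d‖ ^ 2) := by
  rw [← Real.sqrt_mul (by positivity)]
  apply Real.le_sqrt_of_sq_le
  calc ‖a * d - b * c‖ ^ 2 ≤ (‖a‖ * ‖d‖ + ‖b‖ * ‖c‖) ^ 2 := by
        gcongr
        exact (norm_sub_le _ _).trans_eq (by rw [norm_mul, norm_mul])
    _ ≤ _ := by nlinarith [sq_nonneg (‖a‖ * ‖c‖ - ‖b‖ * ‖d‖)]

lemma norm_deriv_mul_sub_mul_deriv_mul_le {f g : ℂ → ℂ} {c : ℂ} {R M : ℝ} (hR : 0 < R)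
    (hf : DifferentiableOn ℂ f (ball c R)) (hg : DifferentiableOn ℂ g (ball c R))
    (hM : ∀ w ∈ ball c R, √(‖f w‖ ^ 2 + ‖g w‖ ^ 2) ≤ M) :
    ‖deriv f c * g c - f c * deriv g c‖ * R ≤ M * √(‖f c‖ ^ 2 + ‖g c‖ ^ 2) := by
  set h : ℂ → ℂ := fun w => f w * g c - g w * f c
  have hc : ball c R ∈ 𝓝 c := isOpen_ball.mem_nhds (mem_ball_self hR)
  have hderiv : deriv h c = deriv f c * g c - f c * deriv g c := by
    have hfc := (hf.differentiableAt hc).hasDerivAt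
    have hgc := (hg.differentiableAt hc).hasDerivAt
    exact ((hfc.mul_const (g c)).sub (hgc.mul_const (f c))).deriv.trans (by ring)
  have hmaps : MapsTo h (ball c R) (closedBall (h c) (M * √(‖f c‖ ^ 2 + ‖g c‖ ^ 2))) := by
    intro w hw
    rw [mem_closedBall, show h c = 0 by simp only [h]; ring, dist_zero_right]
    exact (norm_mul_sub_mul_le_sqrt_mul_sqrt _ _ _ _).trans
      (mul_le_mul_of_nonneg_right (hM w hw) (Real.sqrt_nonneg _))
  have hdiff : DifferentiableOn ℂ h (ball c R) := by fun_prop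
  have := Complex.norm_deriv_le_div_of_mapsTo_ball hdiff hmaps hR
  rwa [hderiv, le_div_iff₀ hR] at this

lemma norm_deriv_div_div_one_add_norm_div_sq {f g : ℂ → ℂ} {z : ℂ}
    (hf : DifferentiableAt ℂ f z) (hg : DifferentiableAt ℂ g z) (hz : g z ≠ 0) :
    ‖deriv (fun w => f w / g w) z‖ / (1 + ‖f z / g z‖ ^ 2) =
      ‖deriv f z * g z - f z * deriv g z‖ / (‖f z‖ ^ 2 + ‖g z‖ ^ 2) := by
  have hB : 0 < ‖g z‖ := norm_pos_iff.mpr hz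
  rw [deriv_fun_div hf hg hz, norm_div, norm_pow, norm_div]
  field_simp
  ring

theorem stmt14 (f₀ f_inf : ℂ → ℂ) (δ : ℝ) (hδ : 0 < δ)
    (h₀ : AnalyticOn ℂ f₀ (ball (0:ℂ) 1))
    (hinf : AnalyticOn ℂ f_inf (ball (0:ℂ) 1))
    (hne : ∀ z ∈ ball (0:ℂ) 1, f_inf z ≠ 0)
    (hub : ∀ z ∈ ball (0:ℂ) 1, ‖f₀ z‖ ^ 2 + ‖f_inf z‖ ^ 2 ≤ 1)
    (hlb : ∀ z ∈ ball (0:ℂ) 1, δ ^ 2 < ‖f₀ z‖ ^ 2 + ‖f_inf z‖ ^ 2)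
    (f : ℂ → ℂ) (hfdef : ∀ z ∈ ball (0:ℂ) 1, f z = f₀ z / f_inf z) :
    ∀ z ∈ ball (0:ℂ) 1,
      (2 * ‖deriv f z‖ / (1 + ‖f z‖ ^ 2)) * ((1 - ‖z‖ ^ 2) / 2) ≤ 2 / δ := by
  intro z hz
  have hzn : ‖z‖ < 1 := mem_ball_zero_iff.mp hz
  have hnhds : ball (0:ℂ) 1 ∈ 𝓝 z := isOpen_ball.mem_nhds hz
  have hf : f =ᶠ[𝓝 z] fun w => f₀ w / f_inf w := eventually_of_mem hnhds hfdef
  have hsub : ball z (1 - ‖z‖) ⊆ ball 0 1 := ball_subset_ball' (by rw [dist_zero_right]; linarith)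
  set W := deriv f₀ z * f_inf z - f₀ z * deriv f_inf z
  set S := √(‖f₀ z‖ ^ 2 + ‖f_inf z‖ ^ 2)
  have hδS : δ < S := (Real.lt_sqrt hδ.le).mpr (hlb z hz)
  have hS : S ^ 2 = ‖f₀ z‖ ^ 2 + ‖f_inf z‖ ^ 2 := Real.sq_sqrt (by positivity)
  have hW : ‖W‖ * (1 - ‖z‖) ≤ 1 * S :=
    norm_deriv_mul_sub_mul_deriv_mul_le (by linarith) (h₀.differentiableOn.mono hsub)
      (hinf.differentiableOn.mono hsub) fun w hw => Real.sqrt_le_one.mpr (hub w (hsub hw))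
  rw [hf.deriv_eq, hfdef z hz, mul_div_assoc, norm_deriv_div_div_one_add_norm_div_sq
    (h₀.differentiableOn.differentiableAt hnhds) (hinf.differentiableOn.differentiableAt hnhds)
    (hne z hz), ← hS]
  calc 2 * (‖W‖ / S ^ 2) * ((1 - ‖z‖ ^ 2) / 2) = ‖W‖ * (1 - ‖z‖) * (1 + ‖z‖) / S ^ 2 := by ring
    _ ≤ S * 2 / S ^ 2 := by gcongr <;> linarith
    _ = 2 / S := by field_simp
    _ ≤ 2 / δ := by gcongr
end
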